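/- Let v be a submodular set function on (Ω,𝓕), and let E, K₁, …, Kₙ be measurable with a chain decomposition Ω \ K = ⋃ᵢ₌₁^{n'} (C'ᵢ \ D'ᵢ) where C'₁ ⊇ D'₁ ⊇ ⋯ ⊇ D'_{n'}. Then Σᵢ₌₁^{n'} (v(C'ᵢ) − v(D'ᵢ)) ≤ v(⋃ᵢ₌₁^{n'} (C'ᵢ \ D'ᵢ)). (Chain-sum bound from the submodular inequality applied iteratively.) -/

import Mathlib

/-! With `A m = ⋃_{m ≤ i < n} (C i \ D i)`, the chain condition gives `A m ∪ D m = C m` and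
`A m ∩ D m = A (m + 1)`, so submodularity bounds `v (C m) - v (D m)` by `v (A m) - v (A (m + 1))`,
and these bounds telescope to `v (A 0)`. -/

open Set

section Chain

variable {Ω : Type*} {C D : ℕ → Set Ω} {n m : ℕ}

def chainTail (C D : ℕ → Set Ω) (n m : ℕ) : Set Ω :=
  ⋃ i ∈ Finset.Ico m n, C i \ D i

lemma chainTail_self : chainTail C D n n = ∅ := by
  simp [chainTail]

lemma chainTail_eq_union (hm : m < n) :
    chainTail C D n m = (C m \ D m) ∪ chainTail C D n (m + 1) := by
  rw [chainTail, ← Finset.insert_Ico_add_one_left_eq_Ico hm, Finset.set_biUnion_insert]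
  rfl

lemma measurableSet_chainTail [MeasurableSpace Ω] (hC : ∀ i < n, MeasurableSet (C i))
    (hD : ∀ i < n, MeasurableSet (D i)) (m : ℕ) : MeasurableSet (chainTail C D n m) :=
  Finset.measurableSet_biUnion _ fun i hi =>
    (hC i (Finset.mem_Ico.mp hi).2).diff (hD i (Finset.mem_Ico.mp hi).2)

variable (hDC : ∀ i < n, D i ⊆ C i) (hCD : ∀ i, i + 1 < n → C (i + 1) ⊆ D i)
include hDC hCD

lemma chain_subset_of_lt {i j : ℕ} (hij : i < j) (hj : j < n) : C j ⊆ D i := by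
  induction j, hij using Nat.le_induction with
  | base => exact hCD i hj
  | succ j hij ih => exact (hCD j hj).trans ((hDC j (by omega)).trans (ih (by omega)))

lemma chainTail_succ_subset (m : ℕ) : chainTail C D n (m + 1) ⊆ D m := by
  simp only [chainTail, Finset.mem_Ico]
  exact iUnion₂_subset fun i hi =>
    sdiff_subset.trans (chain_subset_of_lt hDC hCD hi.1 hi.2)

lemma chainTail_union (hm : m < n) : chainTail C D n m ∪ D m = C m := by
  have := chainTail_succ_subset hDC hCD m
  have := hDC m hm
  rw [chainTail_eq_union hm]
  ext x; simp only [mem_union, mem_sdiff]; tauto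

lemma chainTail_inter (hm : m < n) : chainTail C D n m ∩ D m = chainTail C D n (m + 1) := by
  have := chainTail_succ_subset hDC hCD m
  rw [chainTail_eq_union hm]
  ext x; simp only [mem_union, mem_inter_iff, mem_sdiff]; tauto

end Chain

theorem chain_sum_bound_general {Ω : Type*} [MeasurableSpace Ω] (v : Set Ω → ℝ)
    (hv0 : v ∅ = 0)
    (hsub : ∀ A B : Set Ω, MeasurableSet A → MeasurableSet B →
      v (A ∪ B) + v (A ∩ B) ≤ v A + v B)
    (n' : ℕ) (C D : ℕ → Set Ω)
    (hC : ∀ i < n', MeasurableSet (C i)) (hD : ∀ i < n', MeasurableSet (D i))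
    (hDC : ∀ i < n', D i ⊆ C i) (hCD : ∀ i, i + 1 < n' → C (i + 1) ⊆ D i) :
    ∑ i ∈ Finset.range n', (v (C i) - v (D i))
      ≤ v (⋃ i ∈ Finset.range n', C i \ D i) := by
  set A := chainTail C D n'
  have step : ∀ i ∈ Finset.range n', v (C i) - v (D i) ≤ v (A i) - v (A (i + 1)) := by
    intro i hi
    have hi := Finset.mem_range.mp hi
    have hvi := hsub (A i) (D i) (measurableSet_chainTail hC hD i) (hD i hi)
    rw [chainTail_union hDC hCD hi, chainTail_inter hDC hCD hi] at hvi
    linarith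
  calc ∑ i ∈ Finset.range n', (v (C i) - v (D i))
      ≤ ∑ i ∈ Finset.range n', (v (A i) - v (A (i + 1))) := Finset.sum_le_sum step
    _ = v (A 0) := by
      rw [Finset.sum_range_sub', show A n' = ∅ from chainTail_self, hv0, sub_zero]
    _ = v (⋃ i ∈ Finset.range n', C i \ D i) := by rw [Finset.range_eq_Ico]; rfl

theorem chain_sum_bound {Ω : Type*} [MeasurableSpace Ω] (v : Set Ω → ℝ)
    (hv0 : v ∅ = 0)
    (hmono : ∀ A B : Set Ω, MeasurableSet A → MeasurableSet B → A ⊆ B → v A ≤ v B)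
    (hsub : ∀ A B : Set Ω, MeasurableSet A → MeasurableSet B →
      v (A ∪ B) + v (A ∩ B) ≤ v A + v B)
    (n' : ℕ) (C D : ℕ → Set Ω)
    (hC : ∀ i < n', MeasurableSet (C i)) (hD : ∀ i < n', MeasurableSet (D i))
    (hDC : ∀ i < n', D i ⊆ C i) (hCD : ∀ i, i + 1 < n' → C (i + 1) ⊆ D i) :
    ∑ i ∈ Finset.range n', (v (C i) - v (D i))
      ≤ v (⋃ i ∈ Finset.range n', C i \ D i) :=
  chain_sum_bound_general v hv0 hsub n' C D hC hD hDC hCD
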